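/- arXiv:2505.09276 — 4 statements merged into one kernel-verified Lean document; each statement's English description precedes it below -/
import Mathlib

section
/- Let q be a prime number, let G be a finite group with Fintype.card G = q, and let k be a natural number. Then the pushforward of the uniform distribution on (Fin k → G) × (ZMod q)ˣ under the map (u, a) ↦ (fun i => (u i) ^ ((a : ZMod q)).val) equals the uniform distribution on Fin k → G; that is, raising k independent uniform group elements to a single independent uniform unit exponent yields k independent uniform group elements. -/
/-!
For a fixed unit `a` of `ZMod q`, the exponent `a.val` is coprime to `q = |G|`, so
`g ↦ g ^ a.val` is a permutation of `G`, and hence `u ↦ (u i ^ a.val)ᵢ` is a permutation of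
`Fin k → G`. A permutation preserves the uniform distribution, so conditionally on every value of
the common exponent the output is uniform, and therefore so is the mixture.
-/

open Function
open scoped ENNReal

namespace PMF

variable {α β γ : Type*} [Fintype α] [Nonempty α] [Fintype β] [Nonempty β]
  [Fintype γ] [Nonempty γ]

theorem map_uniformOfFintype_prod_of_bijective_left (f : α × β → γ)
    (hf : ∀ b, Bijective fun a => f (a, b)) :
    (uniformOfFintype (α × β)).map f = uniformOfFintype γ := by
  classical
  have hcard : Fintype.card α = Fintype.card γ :=
    Fintype.card_of_bijective (hf (Classical.arbitrary β))
  have slice (c : γ) (b : β) (x : ℝ≥0∞) : (∑ a : α, if c = f (a, b) then x else 0) = x := by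
    rw [(hf b).sum_comp fun c' => if c = c' then x else 0, Fintype.sum_ite_eq]
  ext c
  rw [map_apply, tsum_fintype, Fintype.sum_prod_type_right]
  simp only [uniformOfFintype_apply, slice]
  rw [Finset.sum_const, Finset.card_univ, nsmul_eq_mul, Fintype.card_prod, Nat.cast_mul,
    ENNReal.mul_inv (by simp) (by simp), mul_left_comm, ENNReal.mul_inv_cancel (by simp) (by simp),
    mul_one, hcard]

end PMF

theorem pow_val_units_bijective {G : Type*} [Group G] {n : ℕ} (hcard : Nat.card G = n)
    (a : (ZMod n)ˣ) : Bijective fun g : G => g ^ (a : ZMod n).val :=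
  (powCoprime (hcard ▸ (ZMod.val_coe_unit_coprime a).symm)).bijective

theorem map_uniform_common_unit_pow_eq_uniform_general (q : ℕ) [NeZero q]
    (G : Type*) [Group G] [Fintype G] (hcard : Fintype.card G = q) (k : ℕ) :
    PMF.map
        (fun p : (Fin k → G) × (ZMod q)ˣ => fun i : Fin k => (p.1 i) ^ ((p.2 : ZMod q)).val)
        (PMF.uniformOfFintype ((Fin k → G) × (ZMod q)ˣ)) =
      PMF.uniformOfFintype (Fin k → G) :=
  PMF.map_uniformOfFintype_prod_of_bijective_left _ fun a =>
    Bijective.piMap fun _ => pow_val_units_bijective (Nat.card_eq_fintype_card.trans hcard) a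

/-- Rerandomization: raising `k` independent uniform elements of a group of prime order `q`
to one common independent uniform unit exponent yields `k` independent uniform elements. -/
theorem map_uniform_common_unit_pow_eq_uniform (q : ℕ) (hq : q.Prime) [NeZero q]
    (G : Type*) [Group G] [Fintype G] (hcard : Fintype.card G = q) (k : ℕ) :
    PMF.map
        (fun p : (Fin k → G) × (ZMod q)ˣ => fun i : Fin k => (p.1 i) ^ ((p.2 : ZMod q)).val)
        (PMF.uniformOfFintype ((Fin k → G) × (ZMod q)ˣ)) =
      PMF.uniformOfFintype (Fin k → G) :=
  map_uniform_common_unit_pow_eq_uniform_general q G hcard k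
end

section
/- Let q be a prime number, let G be a finite group with Fintype.card G = q, and let k, f be natural numbers. For every j < f there exists a randomized map R : (Fin k → G) × (Fin k → G) → PMF ((Fin k → G) × (Fin f → Fin k → G)) such that NRcommon.bind R = H j and NRindep.bind R = H (j+1), where NRcommon, NRindep are the Naor–Reingold distributions and H j is the j-th hybrid distribution. -/
/-- Naor–Reingold "common exponent" distribution on `(Fin k → G) × (Fin k → G)`:
sample `u` with independent uniform coordinates and one uniform unit `a ∈ (ZMod q)ˣ`,
output `(u, fun i => (u i) ^ a)`. -/
noncomputable def NRcommon (q : ℕ) [NeZero q] (G : Type*) [Group G] [Fintype G] (k : ℕ) :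
    PMF ((Fin k → G) × (Fin k → G)) :=
  (PMF.uniformOfFintype (Fin k → G)).bind fun u =>
    (PMF.uniformOfFintype (ZMod q)ˣ).bind fun a =>
      PMF.pure (u, fun i => (u i) ^ ((a : ZMod q)).val)

/-- Naor–Reingold "independent exponents" distribution on `(Fin k → G) × (Fin k → G)`:
sample `u` with independent uniform coordinates and independent uniform units
`a : Fin k → (ZMod q)ˣ`, output `(u, fun i => (u i) ^ (a i))`. -/
noncomputable def NRindep (q : ℕ) [NeZero q] (G : Type*) [Group G] [Fintype G] (k : ℕ) :
    PMF ((Fin k → G) × (Fin k → G)) :=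
  (PMF.uniformOfFintype (Fin k → G)).bind fun u =>
    (PMF.uniformOfFintype (Fin k → (ZMod q)ˣ)).bind fun a =>
      PMF.pure (u, fun i => (u i) ^ ((a i : ZMod q)).val)

/-- The `j`-th hybrid distribution on `(Fin k → G) × (Fin f → Fin k → G)`: sample
`u : Fin k → G` with independent uniform coordinates, independent uniform units
`e t i ∈ (ZMod q)ˣ`, and independent uniform units `d t ∈ (ZMod q)ˣ`; block `t` of the
output is `fun i => (u i) ^ (e t i)` when `t < j` (fresh exponent per element) and
`fun i => (u i) ^ (d t)` otherwise (one fresh exponent per block). -/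
noncomputable def hybridNR (q : ℕ) [NeZero q] (G : Type*) [Group G] [Fintype G]
    (k f j : ℕ) : PMF ((Fin k → G) × (Fin f → Fin k → G)) :=
  (PMF.uniformOfFintype (Fin k → G)).bind fun u =>
    (PMF.uniformOfFintype (Fin f → Fin k → (ZMod q)ˣ)).bind fun e =>
      (PMF.uniformOfFintype (Fin f → (ZMod q)ˣ)).bind fun d =>
        PMF.pure
          (u, fun t i =>
            if (t : ℕ) < j then (u i) ^ ((e t i : ZMod q)).val
            else (u i) ^ ((d t : ZMod q)).val)

private def updEquiv {ι κ : Type*} [DecidableEq ι] (j : ι) :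
    κ × (ι → κ) ≃ (ι → κ) × κ where
  toFun p := (Function.update p.2 j p.1, p.2 j)
  invFun p := (p.1 j, Function.update p.1 j p.2)
  left_inv := by
    rintro ⟨a, d⟩
    simp [Function.update_idem, Function.update_eq_self]
  right_inv := by
    rintro ⟨d, b⟩
    simp [Function.update_idem, Function.update_eq_self]

lemma update_bind_uniform {ι κ : Type*} [Fintype ι] [DecidableEq ι]
    [Fintype κ] [Nonempty κ] (j : ι) :
    ((PMF.uniformOfFintype κ).bind fun a =>
      (PMF.uniformOfFintype (ι → κ)).bind fun d =>
        PMF.pure (Function.update d j a)) = PMF.uniformOfFintype (ι → κ) := by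
  ext x
  simp only [PMF.bind_apply, PMF.uniformOfFintype_apply, PMF.pure_apply, tsum_fintype]
  have hcount : ∀ (D : ∀ (a : κ) (d : ι → κ), Decidable (x = Function.update d j a)),
      (∑ a : κ, ∑ d : ι → κ, (@ite ENNReal _ (D a d) 1 0))
      = (Fintype.card κ : ENNReal) := by
    classical
    intro D
    calc ∑ a : κ, ∑ d : ι → κ, (@ite ENNReal _ (D a d) 1 0)
        = ∑ p : κ × (ι → κ), (@ite ENNReal _ (D p.1 p.2) 1 0) := by
          rw [Fintype.sum_prod_type]
      _ = ∑ p : (ι → κ) × κ, (if x = p.1 then (1:ENNReal) else 0) :=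
          Fintype.sum_equiv (updEquiv j) _ _
            (fun p => ite_congr rfl (fun _ => rfl) (fun _ => rfl))
      _ = ∑ d' : ι → κ, ∑ _b : κ, (if x = d' then (1:ENNReal) else 0) := by
          rw [Fintype.sum_prod_type]
      _ = ∑ d' : ι → κ, (Fintype.card κ : ENNReal) * (if x = d' then (1:ENNReal) else 0) := by
          simp [Finset.sum_const, nsmul_eq_mul]
      _ = (Fintype.card κ : ENNReal) * ∑ d' : ι → κ, (if x = d' then (1:ENNReal) else 0) := by
          rw [Finset.mul_sum]
      _ = (Fintype.card κ : ENNReal) := by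
          rw [Finset.sum_ite_eq]; simp
  simp only [← Finset.mul_sum]
  rw [hcount (fun a d => Classical.propDecidable _)]
  have h0 : ((Fintype.card κ : ENNReal)) ≠ 0 := by
    simp [Fintype.card_ne_zero]
  have ht : ((Fintype.card κ : ENNReal)) ≠ ⊤ := ENNReal.natCast_ne_top _
  rw [mul_comm ((Fintype.card (ι → κ) : ENNReal))⁻¹, ← mul_assoc,
    ENNReal.inv_mul_cancel h0 ht, one_mul]


/-- Reduction step of the extended Naor–Reingold lemma: for every `j < f` there is a
randomized map `R` carrying `NRcommon` to the hybrid `H j` and `NRindep` to `H (j+1)`. -/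
theorem hybridNR_reduction (q : ℕ) (hq : q.Prime) [NeZero q]
    (G : Type*) [Group G] [Fintype G] (hcard : Fintype.card G = q)
    (k f : ℕ) (j : ℕ) (hj : j < f) :
    ∃ R : (Fin k → G) × (Fin k → G) → PMF ((Fin k → G) × (Fin f → Fin k → G)),
      (NRcommon q G k).bind R = hybridNR q G k f j ∧
      (NRindep q G k).bind R = hybridNR q G k f (j + 1) := by
  set jf : Fin f := ⟨j, hj⟩ with hjf
  refine ⟨fun p =>
    (PMF.uniformOfFintype (Fin f → Fin k → (ZMod q)ˣ)).bind fun e =>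
      (PMF.uniformOfFintype (Fin f → (ZMod q)ˣ)).bind fun d =>
        PMF.pure (p.1, fun t i =>
          if (t : ℕ) < j then p.1 i ^ ((e t i : ZMod q)).val
          else if t = jf then p.2 i
          else p.1 i ^ ((d t : ZMod q)).val), ?_, ?_⟩
  · -- common → H j
    rw [NRcommon, hybridNR]
    simp only [PMF.bind_bind, PMF.pure_bind]
    refine congrArg (PMF.bind _) (funext fun u => ?_)
    rw [PMF.bind_comm]
    refine congrArg (PMF.bind _) (funext fun e => ?_)
    trans (((PMF.uniformOfFintype (ZMod q)ˣ).bind fun a =>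
        (PMF.uniformOfFintype (Fin f → (ZMod q)ˣ)).bind fun d =>
          PMF.pure (Function.update d jf a)).bind fun d' =>
        PMF.pure (u, fun t i =>
          if (t : ℕ) < j then u i ^ ((e t i : ZMod q)).val
          else u i ^ ((d' t : ZMod q)).val))
    · simp only [PMF.bind_bind, PMF.pure_bind]
      refine congrArg (PMF.bind _) (funext fun a =>
        congrArg (PMF.bind _) (funext fun d =>
          congrArg PMF.pure (congrArg (Prod.mk u) ?_)))
      funext t i
      by_cases h1 : (t : ℕ) < j
      · simp [h1]
      · by_cases h2 : t = jf
        · subst h2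
          simp [h1]
        · simp [h1, h2, Function.update_of_ne h2]
    · rw [update_bind_uniform]
  · -- indep → H (j+1)
    rw [NRindep, hybridNR]
    simp only [PMF.bind_bind, PMF.pure_bind]
    refine congrArg (PMF.bind _) (funext fun u => ?_)
    trans (((PMF.uniformOfFintype (Fin k → (ZMod q)ˣ)).bind fun a =>
        (PMF.uniformOfFintype (Fin f → Fin k → (ZMod q)ˣ)).bind fun e =>
          PMF.pure (Function.update e jf a)).bind fun e' =>
        (PMF.uniformOfFintype (Fin f → (ZMod q)ˣ)).bind fun d =>
          PMF.pure (u, fun t i =>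
            if (t : ℕ) < j + 1 then u i ^ ((e' t i : ZMod q)).val
            else u i ^ ((d t : ZMod q)).val))
    · simp only [PMF.bind_bind, PMF.pure_bind]
      refine congrArg (PMF.bind _) (funext fun a =>
        congrArg (PMF.bind _) (funext fun e =>
          congrArg (PMF.bind _) (funext fun d =>
            congrArg PMF.pure (congrArg (Prod.mk u) ?_))))
      funext t i
      by_cases h2 : t = jf
      · subst h2
        simp [hjf]
      · have hne : (t : ℕ) ≠ j := by
          intro h
          exact h2 (Fin.ext h)
        by_cases h1 : (t : ℕ) < j
        · have h1' : (t : ℕ) < j + 1 := Nat.lt_succ_of_lt h1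
          simp [h1, h1', Function.update_of_ne h2]
        · have h1' : ¬ (t : ℕ) < j + 1 := by omega
          simp [h1, h1', h2]
    · rw [update_bind_uniform]
end

section
/- Let q be a prime number, let G be a finite group with Fintype.card G = q, and let k, f be natural numbers with f ≥ 1. For every ε ≥ 0 and every randomized distinguisher D : (Fin k → G) × (Fin f → Fin k → G) → PMF Bool whose advantage between the hybrid distributions H 0 and H f is at least ε, there exists a randomized distinguisher D' : (Fin k → G) × (Fin k → G) → PMF Bool whose advantage between the Naor–Reingold distributions NRcommon and NRindep is at least ε / f. -/
/-- Probability that the randomized distinguisher `D` outputs `true` on a sample of `P`. -/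
noncomputable def prTrue {α : Type*} (D : α → PMF Bool) (P : PMF α) : ℝ :=
  ((P.bind D) true).toReal

/-!
Hybrid argument. The advantage between `H 0` and `H f` telescopes over the `f` consecutive
pairs `(H j, H (j + 1))`, so one of them has advantage at least `ε / f`. Given a
Naor–Reingold challenge `(u, v)`, the reduction samples blocks `t < j` with independent
exponents and blocks `t > j` with one exponent each, and places `v` as block `j`. A
common-exponent challenge then yields exactly `H j` and an independent one `H (j + 1)`,
because writing a fresh uniform value into one coordinate of a uniform vector leaves it uniform.
-/

def Equiv.prodUpdateSwap {ι α : Type*} [DecidableEq ι] (j : ι) :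
    α × (ι → α) ≃ (ι → α) × α where
  toFun p := (Function.update p.2 j p.1, p.2 j)
  invFun p := (p.1 j, Function.update p.1 j p.2)
  left_inv p := by simp
  right_inv p := by simp

namespace PMF

variable {α β : Type*} [Fintype α] [Nonempty α]

theorem uniformOfFintype_bind_bind_pure_prod [Fintype β] [Nonempty β] :
    ((uniformOfFintype α).bind fun a => (uniformOfFintype β).bind fun b => pure (a, b)) =
      uniformOfFintype (α × β) := by
  classical
  ext ⟨a, b⟩
  simp [bind_apply, pure_apply, tsum_fintype, ite_and, Fintype.card_prod, ENNReal.mul_inv]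

theorem uniformOfFintype_map_equiv [Fintype β] [Nonempty β] (e : α ≃ β) :
    (uniformOfFintype α).map e = uniformOfFintype β := by
  ext b
  rw [map_apply, tsum_eq_single (e.symm b) fun a ha => if_neg fun h => ha (by simp [h])]
  simp [Fintype.card_congr e]

theorem uniformOfFintype_bind_bind_update {ι : Type*} [Fintype ι] [DecidableEq ι] (j : ι)
    (X : (ι → α) → PMF β) :
    ((uniformOfFintype α).bind fun a => (uniformOfFintype (ι → α)).bind fun d =>
      X (Function.update d j a)) = (uniformOfFintype (ι → α)).bind X := by
  calc _ = (uniformOfFintype (α × (ι → α))).bind fun p => X (Function.update p.2 j p.1) := by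
        simp only [← uniformOfFintype_bind_bind_pure_prod, bind_bind, pure_bind]
    _ = ((uniformOfFintype (α × (ι → α))).map (Equiv.prodUpdateSwap j)).bind
          fun p => X p.1 := by
        rw [bind_map]; rfl
    _ = (uniformOfFintype ((ι → α) × α)).bind fun p => X p.1 := by
        rw [uniformOfFintype_map_equiv]
    _ = _ := by
        simp only [← uniformOfFintype_bind_bind_pure_prod, bind_bind, pure_bind, bind_const]

end PMF

theorem exists_div_le_abs_sub_succ (p : ℕ → ℝ) {n : ℕ} (hn : 0 < n) {ε : ℝ}
    (h : ε ≤ |p 0 - p n|) : ∃ j < n, ε / n ≤ |p j - p (j + 1)| := by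
  have hsum : ∑ _j ∈ Finset.range n, ε / n ≤ ∑ j ∈ Finset.range n, |p j - p (j + 1)| :=
    calc ∑ _j ∈ Finset.range n, ε / n = ε := by
          rw [Finset.sum_const, Finset.card_range, nsmul_eq_mul]; field_simp
      _ ≤ |p 0 - p n| := h
      _ = |∑ j ∈ Finset.range n, (p j - p (j + 1))| := by rw [Finset.sum_range_sub']
      _ ≤ _ := Finset.abs_sum_le_sum_abs _ _
  obtain ⟨j, hj, hle⟩ := Finset.exists_le_of_sum_le ⟨0, Finset.mem_range.2 hn⟩ hsum
  exact ⟨j, Finset.mem_range.1 hj, hle⟩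

section NaorReingold

variable {G : Type*} [Group G] {k f : ℕ}

def embedChallenge (q : ℕ) (j : Fin f) (u v : Fin k → G) (e : Fin f → Fin k → (ZMod q)ˣ)
    (d : Fin f → (ZMod q)ˣ) : Fin f → Fin k → G :=
  fun t i => if (t : ℕ) < j then u i ^ (e t i : ZMod q).val
    else if t = j then v i else u i ^ (d t : ZMod q).val

noncomputable def hybridReduction (q : ℕ) [NeZero q]
    (D : (Fin k → G) × (Fin f → Fin k → G) → PMF Bool) (j : Fin f) :
    (Fin k → G) × (Fin k → G) → PMF Bool := fun uv =>
  (PMF.uniformOfFintype (Fin f → Fin k → (ZMod q)ˣ)).bind fun e =>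
    (PMF.uniformOfFintype (Fin f → (ZMod q)ˣ)).bind fun d =>
      D (uv.1, embedChallenge q j uv.1 uv.2 e d)

theorem embedChallenge_pow_unit {q : ℕ} (j : Fin f) (u : Fin k → G)
    (e : Fin f → Fin k → (ZMod q)ˣ) (d : Fin f → (ZMod q)ˣ) (a : (ZMod q)ˣ) :
    embedChallenge q j u (fun i => u i ^ (a : ZMod q).val) e d = fun (t : Fin f) i =>
      if (t : ℕ) < j then u i ^ (e t i : ZMod q).val
      else u i ^ (Function.update d j a t : ZMod q).val := by
  ext t i
  rcases lt_trichotomy t j with h | rfl | h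
  · simp [embedChallenge, h]
  · simp [embedChallenge]
  · simp [embedChallenge, h.ne', not_lt_of_gt h]

theorem embedChallenge_pow_units {q : ℕ} (j : Fin f) (u : Fin k → G)
    (e : Fin f → Fin k → (ZMod q)ˣ) (d : Fin f → (ZMod q)ˣ) (b : Fin k → (ZMod q)ˣ) :
    embedChallenge q j u (fun i => u i ^ (b i : ZMod q).val) e d = fun (t : Fin f) i =>
      if (t : ℕ) < j + 1 then u i ^ (Function.update e j b t i : ZMod q).val
      else u i ^ (d t : ZMod q).val := by
  ext t i
  rcases lt_trichotomy t j with h | rfl | h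
  · simp [embedChallenge, h, h.ne, Nat.lt_succ_of_lt h]
  · simp [embedChallenge]
  · simp [embedChallenge, h.ne', not_lt_of_gt h, Nat.not_lt.2 h]

variable [Fintype G]

theorem NRcommon_bind_hybridReduction (q : ℕ) [NeZero q]
    (D : (Fin k → G) × (Fin f → Fin k → G) → PMF Bool) (j : Fin f) :
    (NRcommon q G k).bind (hybridReduction q D j) = (hybridNR q G k f j).bind D := by
  simp only [NRcommon, hybridNR, hybridReduction, PMF.bind_bind, PMF.pure_bind,
    embedChallenge_pow_unit]
  refine congrArg _ (funext fun u => ?_)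
  rw [PMF.bind_comm (PMF.uniformOfFintype (ZMod q)ˣ)]
  refine congrArg _ (funext fun e => ?_)
  exact PMF.uniformOfFintype_bind_bind_update j fun (d : Fin f → (ZMod q)ˣ) => D (u, fun t i =>
    if (t : ℕ) < j then u i ^ (e t i : ZMod q).val else u i ^ (d t : ZMod q).val)

theorem NRindep_bind_hybridReduction (q : ℕ) [NeZero q]
    (D : (Fin k → G) × (Fin f → Fin k → G) → PMF Bool) (j : Fin f) :
    (NRindep q G k).bind (hybridReduction q D j) = (hybridNR q G k f (j + 1)).bind D := by
  simp only [NRindep, hybridNR, hybridReduction, PMF.bind_bind, PMF.pure_bind,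
    embedChallenge_pow_units]
  refine congrArg _ (funext fun u => ?_)
  exact PMF.uniformOfFintype_bind_bind_update j fun (e : Fin f → Fin k → (ZMod q)ˣ) =>
    (PMF.uniformOfFintype (Fin f → (ZMod q)ˣ)).bind fun d => D (u, fun t i =>
      if (t : ℕ) < j + 1 then u i ^ (e t i : ZMod q).val else u i ^ (d t : ZMod q).val)

end NaorReingold

theorem hybridNR_advantage_reduction_general (q : ℕ) [NeZero q]
    (G : Type*) [Group G] [Fintype G]
    (k f : ℕ) (hf : 1 ≤ f) (ε : ℝ)
    (D : (Fin k → G) × (Fin f → Fin k → G) → PMF Bool)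
    (hD : ε ≤ |prTrue D (hybridNR q G k f 0) - prTrue D (hybridNR q G k f f)|) :
    ∃ D' : (Fin k → G) × (Fin k → G) → PMF Bool,
      ε / f ≤ |prTrue D' (NRcommon q G k) - prTrue D' (NRindep q G k)| := by
  obtain ⟨j, hj, hadv⟩ :=
    exists_div_le_abs_sub_succ (fun j => prTrue D (hybridNR q G k f j)) hf hD
  refine ⟨hybridReduction q D ⟨j, hj⟩, ?_⟩
  simpa only [prTrue, NRcommon_bind_hybridReduction, NRindep_bind_hybridReduction] using hadv

/-- Concrete-security form of the extended Naor–Reingold lemma: any distinguisher with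
advantage `ε` between the extreme hybrids `H 0` and `H f` yields a distinguisher with
advantage `ε / f` between `NRcommon` and `NRindep`. -/
theorem hybridNR_advantage_reduction (q : ℕ) (hq : q.Prime) [NeZero q]
    (G : Type*) [Group G] [Fintype G] (hcard : Fintype.card G = q)
    (k f : ℕ) (hf : 1 ≤ f) (ε : ℝ) (hε : 0 ≤ ε)
    (D : (Fin k → G) × (Fin f → Fin k → G) → PMF Bool)
    (hD : ε ≤ |prTrue D (hybridNR q G k f 0) - prTrue D (hybridNR q G k f f)|) :
    ∃ D' : (Fin k → G) × (Fin k → G) → PMF Bool,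
      ε / f ≤ |prTrue D' (NRcommon q G k) - prTrue D' (NRindep q G k)| :=
  hybridNR_advantage_reduction_general q G k f hf ε D hD
end

section
/- Let c, s, m be natural numbers, let π : Fin (2 * c) → Fin (c + s + m) satisfy the topological-order condition (for every j < c, π(2j) < s + m + j and π(2j+1) < s + m + j), let x : Fin (s + m) → Bool be an input assignment, and let v be the unique valuation of the circuit on x. Let K, C be types and Enc : K → K → K → C, Dec : K → K → C → Option K a double-keyed encryption scheme with perfect correctness (Dec k1 k2 (Enc k1 k2 m) = some m) and wrong-key detection (Dec k1' k2' (Enc k1 k2 m) = none whenever (k1', k2') ≠ (k1, k2)). Let w : Fin (c + s + m) → Bool → K assign to every feed-out wire two labels with w i 0 ≠ w i 1 for every i, and garble gate j as the four ciphertexts ct j a b = Enc (w (π (2j)) a) (w (π (2j+1)) b) (w (s + m + j) (¬(a ∧ b))) for a, b : Bool. Define the active-label function F i = w i (v i). Then for every gate j < c and all a, b : Bool, Dec (F (π (2j))) (F (π (2j+1))) (ct j a b) = some (F (s + m + j)) if a = v (π (2j)) and b = v (π (2j+1)), and equals none otherwise; hence an evaluator holding the active labels of the circuit's input wires recovers,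 gate by gate in topological order, exactly the active label w i (v i) of every feed-out wire of the circuit. -/
/-! Decrypting with the active labels of the two feed-in wires opens exactly the ciphertext
encrypted under that key pair (wrong-key detection rejects the other three, as distinct values
carry distinct labels), and that row encrypts the label of the NAND of the two active values,
i.e. the active label of the gate's output wire. -/

section Encryption

variable {K C : Type*} {Enc : K → K → K → C} {Dec : K → K → C → Option K}

theorem dec_enc_eq_ite [DecidableEq K]
    (hcorrect : ∀ k1 k2 msg, Dec k1 k2 (Enc k1 k2 msg) = some msg)
    (hwrong : ∀ k1 k2 k1' k2' msg, (k1', k2') ≠ (k1, k2) → Dec k1' k2' (Enc k1 k2 msg) = none)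
    (k1 k2 k1' k2' msg : K) :
    Dec k1' k2' (Enc k1 k2 msg) = if (k1, k2) = (k1', k2') then some msg else none := by
  split_ifs with h
  · obtain ⟨rfl, rfl⟩ := Prod.mk.inj h
    exact hcorrect k1 k2 msg
  · exact hwrong k1 k2 k1' k2' msg (Ne.symm h)

theorem dec_garbledNand_eq_ite
    (hcorrect : ∀ k1 k2 msg, Dec k1 k2 (Enc k1 k2 msg) = some msg)
    (hwrong : ∀ k1 k2 k1' k2' msg, (k1', k2') ≠ (k1, k2) → Dec k1' k2' (Enc k1 k2 msg) = none)
    {wl wr : Bool → K} (hwl : wl false ≠ wl true) (hwr : wr false ≠ wr true)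
    (wo : Bool → K) (a b a' b' : Bool) :
    Dec (wl a') (wr b') (Enc (wl a) (wr b) (wo (!(a && b)))) =
      if a = a' ∧ b = b' then some (wo (!(a' && b'))) else none := by
  classical
  have hlabels : (wl a, wr b) = (wl a', wr b') ↔ a = a' ∧ b = b' := by
    rw [Prod.mk.injEq, (Bool.injective_iff.2 hwl).eq_iff, (Bool.injective_iff.2 hwr).eq_iff]
  rw [dec_enc_eq_ite hcorrect hwrong, if_congr hlabels rfl rfl]
  split_ifs with h
  · rw [h.1, h.2]
  · rfl

end Encryption

theorem garbledCircuit_eval_correct (c s m : ℕ) (π : Fin (2 * c) → Fin (c + s + m))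
    (v : Fin (c + s + m) → Bool)
    (hvgate : ∀ j : ℕ, ∀ hj : j < c,
      v ⟨s + m + j, by omega⟩ =
        !(v (π ⟨2 * j, by omega⟩) && v (π ⟨2 * j + 1, by omega⟩)))
    {K C : Type*} (Enc : K → K → K → C) (Dec : K → K → C → Option K)
    (hcorrect : ∀ k1 k2 msg, Dec k1 k2 (Enc k1 k2 msg) = some msg)
    (hwrong : ∀ k1 k2 k1' k2' msg, (k1', k2') ≠ (k1, k2) → Dec k1' k2' (Enc k1 k2 msg) = none)
    (w : Fin (c + s + m) → Bool → K) (hw : ∀ i, w i false ≠ w i true) :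
    ∀ j : ℕ, ∀ hj : j < c, ∀ a b : Bool,
      Dec (w (π ⟨2 * j, by omega⟩) (v (π ⟨2 * j, by omega⟩)))
          (w (π ⟨2 * j + 1, by omega⟩) (v (π ⟨2 * j + 1, by omega⟩)))
          (Enc (w (π ⟨2 * j, by omega⟩) a) (w (π ⟨2 * j + 1, by omega⟩) b)
            (w ⟨s + m + j, by omega⟩ (!(a && b)))) =
        if a = v (π ⟨2 * j, by omega⟩) ∧ b = v (π ⟨2 * j + 1, by omega⟩) then
          some (w ⟨s + m + j, by omega⟩ (v ⟨s + m + j, by omega⟩))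
        else none := by
  intro j hj a b
  rw [hvgate j hj]
  exact dec_garbledNand_eq_ite hcorrect hwrong (hw _) (hw _) _ a b _ _
end
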